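/- arXiv:2202.03523 — 2 statements merged into one kernel-verified Lean document; each statement's English description precedes it below -/
import Mathlib

section
/- Assume Assumptions A1 and A2 hold, and suppose every channel in O_R maps every state in F to a state in F. Then: (1) for every family τ_Λ of states on the subsystems X ∈ Λ, R_{R|T}(τ_Λ) = 0 if and only if τ_Λ ∈ C_{R|T,Λ}; (2) for every family σ_Λ of states on the X ∈ Λ and every ℰ_Λ ∈ 𝔒_{R|T,Λ}, R_{R|T}(ℰ_Λ(σ_Λ)) ≤ R_{R|T}(σ_Λ). -/
open scoped ComplexOrder ENNReal Kronecker Matrix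

namespace RMP

variable {ι : Type} [Fintype ι] [DecidableEq ι]
variable (d : ι → Type) [∀ i, Fintype (d i)] [∀ i, DecidableEq (d i)] [∀ i, Nonempty (d i)]

/-- The space of matrices on the global system. -/
abbrev GlobalMat : Type := Matrix (∀ i, d i) (∀ i, d i) ℂ

/-- The space of matrices on the subsystem `X`. -/
abbrev SubMat (X : Finset ι) : Type :=
  Matrix (∀ i : X, d i.1) (∀ i : X, d i.1) ℂ

/-- A quantum state: positive semidefinite with unit trace. -/
def IsState {m : Type} [Fintype m] (ρ : Matrix m m ℂ) : Prop :=
  ρ.PosSemidef ∧ ρ.trace = 1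

/-- Combine an assignment on `X` with an assignment on its complement. -/
def combine (X : Finset ι) (a : ∀ i : X, d i.1) (c : ∀ i : (Xᶜ : Finset ι), d i.1) :
    ∀ i, d i := fun i =>
  if h : i ∈ X then a ⟨i, h⟩ else c ⟨i, Finset.mem_compl.mpr h⟩

/-- Partial trace onto subsystem `X`. -/
noncomputable def ptrace (X : Finset ι) (ρ : GlobalMat d) : SubMat d X :=
  Matrix.of fun a b =>
    ∑ c : ∀ i : (Xᶜ : Finset ι), d i.1, ρ (combine d X a c) (combine d X b c)

variable (Λ : Finset (Finset ι)) (T : Finset ι) (F : Set (SubMat d T))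

/-- The set `C_{R|T,Λ}` of `R`-free compatible families of marginals. -/
def CRT : Set (∀ X : Λ, SubMat d X.1) :=
  {σ | ∃ ρ : GlobalMat d, IsState ρ ∧ (∀ X : Λ, ptrace d X.1 ρ = σ X) ∧ ptrace d T ρ ∈ F}

/-- The cone `𝒞_{R|T}`. -/
def coneRT : Set (GlobalMat d) :=
  {V | ∃ α : ℝ, 0 ≤ α ∧ ∃ η : GlobalMat d, IsState η ∧ ptrace d T η ∈ F ∧ V = α • η}

/-- A proper cone of global matrices. -/
def IsProperCone (C : Set (GlobalMat d)) : Prop :=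
  C.Nonempty ∧ Convex ℝ C ∧ IsClosed C ∧
    (∀ (α : ℝ) (V : GlobalMat d), 0 ≤ α → V ∈ C → α • V ∈ C) ∧
    (∀ V : GlobalMat d, V ∈ C → -V ∈ C → V = 0)

/-- The primal value `t(σ_Λ)`. -/
noncomputable def primal (σ : ∀ X : Λ, SubMat d X.1) : ℝ≥0∞ :=
  sInf {t | ∃ V ∈ coneRT d T F,
    (∀ X : Λ, (ptrace d X.1 V - σ X).PosSemidef) ∧ t = ENNReal.ofReal V.trace.re}

/-- The dual value `s(σ_Λ)`. -/
noncomputable def dual (σ : ∀ X : Λ, SubMat d X.1) : ℝ≥0∞ :=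
  sSup {s | ∃ Y : ∀ X : Λ, SubMat d X.1,
    (∀ X : Λ, (Y X).PosSemidef) ∧
    (∀ τ ∈ CRT d Λ T F, (∑ X : Λ, (τ X * Y X).trace.re) ≤ 1) ∧
    s = ENNReal.ofReal (∑ X : Λ, (σ X * Y X).trace.re)}

end RMP

namespace RMP

/-- The Choi matrix of a linear map between matrix spaces. -/
noncomputable def choi {m n : Type} [Fintype m] [DecidableEq m] [Fintype n]
    (Φ : Matrix m m ℂ →ₗ[ℂ] Matrix n n ℂ) : Matrix (n × m) (n × m) ℂ :=
  ∑ a : m, ∑ b : m, (Φ (Matrix.single a b 1)) ⊗ₖ (Matrix.single a b 1)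

/-- A quantum channel: completely positive (positive semidefinite Choi matrix) and
trace preserving. -/
def IsChannel {m n : Type} [Fintype m] [DecidableEq m] [Fintype n]
    (Φ : Matrix m m ℂ →ₗ[ℂ] Matrix n n ℂ) : Prop :=
  (choi Φ).PosSemidef ∧ ∀ M : Matrix m m ℂ, (Φ M).trace = M.trace

/-- `ℰX` is the marginal channel of the global channel `ℰS` on the subsystem `X`. -/
def IsMarginalChannel {ι : Type} [Fintype ι] [DecidableEq ι]
    (d : ι → Type) [∀ i, Fintype (d i)] [∀ i, DecidableEq (d i)]
    (ℰS : GlobalMat d →ₗ[ℂ] GlobalMat d) (X : Finset ι)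
    (ℰX : SubMat d X →ₗ[ℂ] SubMat d X) : Prop :=
  IsChannel ℰX ∧ ∀ ρ : GlobalMat d, ptrace d X (ℰS ρ) = ℰX (ptrace d X ρ)

/-- The set `𝔒_{R|T,Λ}` of free operations induced by the free channels `O_R` on `T`. -/
def freeOps {ι : Type} [Fintype ι] [DecidableEq ι]
    (d : ι → Type) [∀ i, Fintype (d i)] [∀ i, DecidableEq (d i)]
    (Λ : Finset (Finset ι)) (T : Finset ι)
    (OR : Set (SubMat d T →ₗ[ℂ] SubMat d T)) :
    Set (∀ X : Λ, SubMat d X.1 →ₗ[ℂ] SubMat d X.1) :=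
  {ℰ | (∀ X : Λ, IsChannel (ℰ X)) ∧
    ∃ ℰS : GlobalMat d →ₗ[ℂ] GlobalMat d, IsChannel ℰS ∧
      (∀ X : Λ, IsMarginalChannel d ℰS X.1 (ℰ X)) ∧
      ∃ ℰT ∈ OR, IsMarginalChannel d ℰS T ℰT}

/-- The `R`-free incompatibility robustness `R_{R|T}(σ_Λ)`. -/
noncomputable def robustness {ι : Type} [Fintype ι] [DecidableEq ι]
    (d : ι → Type) [∀ i, Fintype (d i)] [∀ i, DecidableEq (d i)] [∀ i, Nonempty (d i)]
    (Λ : Finset (Finset ι)) (T : Finset ι) (F : Set (SubMat d T))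
    (σ : ∀ X : Λ, SubMat d X.1) : ℝ≥0∞ :=
  sInf {r | ∃ p : ℝ, 0 < p ∧ p ≤ 1 ∧
    (∃ τ : ∀ X : Λ, SubMat d X.1, (∀ X : Λ, IsState (τ X)) ∧
      (fun X : Λ => p • σ X + (1 - p) • τ X) ∈ CRT d Λ T F) ∧
    r = ENNReal.ofReal (-Real.logb 2 p)}

end RMP

namespace RMP


section Aux

open Filter Topology

variable {m n : Type} [Fintype m] [DecidableEq m] [Fintype n]

lemma choi_apply (Φ : Matrix m m ℂ →ₗ[ℂ] Matrix n n ℂ) (i j : n) (a b : m) :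
    choi Φ (i, a) (j, b) = Φ (Matrix.single a b 1) i j := by
  simp [choi, Matrix.sum_apply, Matrix.kroneckerMap_apply, Matrix.single,
    mul_ite, mul_one, mul_zero, ite_and, Finset.sum_ite_eq, Finset.sum_ite_eq']

lemma map_entry (Φ : Matrix m m ℂ →ₗ[ℂ] Matrix n n ℂ) (M : Matrix m m ℂ) (i j : n) :
    Φ M i j = ∑ a : m, ∑ b : m, M a b * choi Φ (i, a) (j, b) := by
  conv_lhs => rw [Matrix.matrix_eq_sum_single M]
  rw [map_sum]
  simp only [Matrix.sum_apply]
  refine Finset.sum_congr rfl fun a _ => ?_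
  rw [map_sum]
  simp only [Matrix.sum_apply]
  refine Finset.sum_congr rfl fun b _ => ?_
  rw [choi_apply, show Matrix.single a b (M a b) = M a b • Matrix.single a b 1
    by rw [Matrix.smul_single, smul_eq_mul, mul_one], map_smul]
  simp [smul_eq_mul]

lemma sum_comm5 {α β γ δ ε M : Type*} [Fintype α] [Fintype β] [Fintype γ] [Fintype δ]
    [Fintype ε] [AddCommMonoid M] (f : α → β → γ → δ → ε → M) :
    ∑ i, ∑ j, ∑ a, ∑ b, ∑ k, f i j a b k = ∑ k, ∑ i, ∑ a, ∑ j, ∑ b, f i j a b k :=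
  calc ∑ i, ∑ j, ∑ a, ∑ b, ∑ k, f i j a b k
      = ∑ i, ∑ j, ∑ a, ∑ k, ∑ b, f i j a b k :=
        Finset.sum_congr rfl fun _ _ => Finset.sum_congr rfl fun _ _ =>
          Finset.sum_congr rfl fun _ _ => Finset.sum_comm
    _ = ∑ i, ∑ j, ∑ k, ∑ a, ∑ b, f i j a b k :=
        Finset.sum_congr rfl fun _ _ => Finset.sum_congr rfl fun _ _ => Finset.sum_comm
    _ = ∑ i, ∑ k, ∑ j, ∑ a, ∑ b, f i j a b k :=
        Finset.sum_congr rfl fun _ _ => Finset.sum_comm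
    _ = ∑ k, ∑ i, ∑ j, ∑ a, ∑ b, f i j a b k := Finset.sum_comm
    _ = ∑ k, ∑ i, ∑ a, ∑ j, ∑ b, f i j a b k :=
        Finset.sum_congr rfl fun _ _ => Finset.sum_congr rfl fun _ _ => Finset.sum_comm

lemma posSemidef_map {Φ : Matrix m m ℂ →ₗ[ℂ] Matrix n n ℂ}
    (hc : (choi Φ).PosSemidef) {M : Matrix m m ℂ} (hM : M.PosSemidef) :
    (Φ M).PosSemidef := by
  refine Matrix.posSemidef_iff_dotProduct_mulVec.mpr ⟨?_, ?_⟩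
  · ext i j
    rw [Matrix.conjTranspose_apply, map_entry, map_entry, star_sum]
    simp only [star_sum, star_mul']
    rw [Finset.sum_comm]
    refine Finset.sum_congr rfl fun a _ => Finset.sum_congr rfl fun b _ => ?_
    rw [hM.1.apply, hc.1.apply, mul_comm]
  · intro x
    obtain ⟨B, hB⟩ : ∃ B : Matrix m m ℂ, M = Bᴴ * B := by
      open scoped MatrixOrder in
      exact CStarAlgebra.nonneg_iff_eq_star_mul_self.mp hM.nonneg
    have key : dotProduct (star x) ((Φ M).mulVec x)
        = ∑ k : m, dotProduct (star fun p : n × m => x p.1 * B k p.2)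
            ((choi Φ).mulVec fun p : n × m => x p.1 * B k p.2) := by
      simp only [dotProduct, Matrix.mulVec, map_entry, hB, Matrix.mul_apply,
        Matrix.conjTranspose_apply, Fintype.sum_prod_type, Finset.mul_sum, Finset.sum_mul,
        Pi.star_apply, star_mul']
      rw [sum_comm5]
      refine Finset.sum_congr rfl fun k _ => Finset.sum_congr rfl fun i _ =>
        Finset.sum_congr rfl fun a _ => Finset.sum_congr rfl fun j _ =>
        Finset.sum_congr rfl fun b _ => ?_
      ring
    rw [key]
    exact Finset.sum_nonneg fun k _ => hc.dotProduct_mulVec_nonneg _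

lemma channel_isState {Φ : Matrix m m ℂ →ₗ[ℂ] Matrix n n ℂ} (hΦ : IsChannel Φ)
    {ρ : Matrix m m ℂ} (hρ : IsState ρ) : IsState (Φ ρ) :=
  ⟨posSemidef_map hΦ.1 hρ.1, by rw [hΦ.2 ρ, hρ.2]⟩

lemma star_single (a : m) (c : ℂ) :
    star (Pi.single a c : m → ℂ) = Pi.single a (star c) := by
  funext i
  by_cases hia : i = a
  · subst hia; simp
  · simp [Pi.single_eq_of_ne hia]

lemma diag_nonneg {M : Matrix m m ℂ} (h : M.PosSemidef) (a : m) : 0 ≤ M a a := by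
  simpa [Matrix.mulVec_single, single_dotProduct, star_single] using
    h.dotProduct_mulVec_nonneg (Pi.single a 1)

lemma diag_re_le_one {M : Matrix m m ℂ} (h : IsState M) (a : m) : (M a a).re ≤ 1 := by
  have htr : ∑ c, (M c c).re = 1 := by
    have := congrArg Complex.re h.2
    simpa [Matrix.trace, Matrix.diag, Complex.re_sum] using this
  calc (M a a).re ≤ ∑ c, (M c c).re :=
        Finset.single_le_sum (fun c _ => (Complex.nonneg_iff.mp (diag_nonneg h.1 c)).1)
          (Finset.mem_univ a)
    _ = 1 := htr

lemma entry_abs_le_one {M : Matrix m m ℂ} (h : IsState M) (a b : m) :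
    ‖M a b‖ ≤ 1 := by
  by_cases hab : a = b
  · subst hab
    have h1 := Complex.nonneg_iff.mp (diag_nonneg h.1 a)
    have h2 := diag_re_le_one h a
    calc ‖M a a‖ = |(M a a).re| := by
          rw [Complex.norm_def, Complex.normSq_apply, ← h1.2, mul_zero, add_zero,
            Real.sqrt_mul_self_eq_abs]
    _ ≤ 1 := by rw [abs_of_nonneg h1.1]; exact h2
  · rcases eq_or_ne (M a b) 0 with h0 | h0
    · simp [h0]
    set r : ℝ := ‖M a b‖ with hr
    have hrpos : 0 < r := norm_pos_iff.mpr h0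
    have hne : (r : ℂ) ≠ 0 := by exact_mod_cast hrpos.ne'
    set c : ℂ := -(star (M a b)) / (r : ℂ) with hc
    have hMba : M b a = star (M a b) := by
      rw [← h.1.1.apply a b, star_star]
    have hss : star (M a b) * M a b = ((r : ℂ) * r) := by
      rw [Complex.star_def, mul_comm, Complex.mul_conj, Complex.normSq_eq_norm_sq, ← hr]
      push_cast
      ring
    have e1 : c * M a b = -(r : ℂ) := by
      rw [hc, div_mul_eq_mul_div, neg_mul, hss, neg_div, mul_div_assoc,
        div_self hne, mul_one]
    have hsc : star c = -(M a b) / (r : ℂ) := by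
      rw [hc, star_div₀, star_neg, star_star]
      simp [Complex.star_def, Complex.conj_ofReal]
    have e2 : star c * M b a = -(r : ℂ) := by
      rw [hsc, hMba, div_mul_eq_mul_div, neg_mul, mul_comm, hss, neg_div,
        mul_div_assoc, div_self hne, mul_one]
    have e3 : star c * c * M b b = M b b := by
      have h1 : star c * c = 1 := by
        rw [hsc, hc, div_mul_div_comm, neg_mul_neg, mul_comm (M a b), hss]
        exact div_self (mul_ne_zero hne hne)
      rw [h1, one_mul]
    have hexp : dotProduct (star (Pi.single a 1 + Pi.single b c))
        (M.mulVec (Pi.single a 1 + Pi.single b c))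
        = M a a + c * M a b + star c * M b a + star c * c * M b b := by
      simp only [star_add, star_single, star_one, Matrix.mulVec_add, Matrix.mulVec_single,
        dotProduct_add, add_dotProduct, single_dotProduct, Pi.smul_apply, op_smul_eq_mul,
        Matrix.col_apply]
      ring
    have hq := h.1.dotProduct_mulVec_nonneg (Pi.single a 1 + Pi.single b c)
    rw [hexp, e1, e2, e3] at hq
    have hre := (Complex.nonneg_iff.mp hq).1
    simp only [Complex.add_re, Complex.neg_re, Complex.ofReal_re] at hre
    have ha := diag_re_le_one h a
    have hb := diag_re_le_one h b
    linarith

lemma isClosed_nonneg : IsClosed {z : ℂ | 0 ≤ z} := by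
  have : {z : ℂ | 0 ≤ z} = Complex.re ⁻¹' (Set.Ici 0) ∩ Complex.im ⁻¹' {0} := by
    ext z
    simp [Complex.nonneg_iff, eq_comm]
  rw [this]
  exact (isClosed_Ici.preimage Complex.continuous_re).inter
    (isClosed_singleton.preimage Complex.continuous_im)

lemma isClosed_setOf_isState : IsClosed {M : Matrix m m ℂ | IsState M} := by
  have hset : {M : Matrix m m ℂ | IsState M} =
      ({M : Matrix m m ℂ | Mᴴ = M} ∩
        ⋂ x : m → ℂ, {M : Matrix m m ℂ | 0 ≤ dotProduct (star x) (M.mulVec x)}) ∩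
        {M : Matrix m m ℂ | M.trace = 1} := by
    ext M
    simp only [Set.mem_setOf_eq, Set.mem_inter_iff, Set.mem_iInter]
    exact ⟨fun h => ⟨⟨h.1.1, h.1.dotProduct_mulVec_nonneg⟩, h.2⟩,
        fun h => ⟨Matrix.PosSemidef.of_dotProduct_mulVec_nonneg h.1.1 h.1.2, h.2⟩⟩
  rw [hset]
  refine IsClosed.inter (IsClosed.inter ?_ (isClosed_iInter fun x => ?_)) ?_
  · exact isClosed_eq (continuous_id.matrix_conjTranspose) continuous_id
  · exact isClosed_nonneg.preimage
      (continuous_const.dotProduct (continuous_id.matrix_mulVec continuous_const))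
  · exact isClosed_eq continuous_id.matrix_trace continuous_const

lemma isCompact_setOf_isState : IsCompact {M : Matrix m m ℂ | IsState M} := by
  refine IsCompact.of_isClosed_subset
    (isCompact_univ_pi fun _ : m => isCompact_univ_pi fun _ : m =>
      isCompact_closedBall (0 : ℂ) 1)
    isClosed_setOf_isState ?_
  intro M hM a _
  intro b _
  rw [Metric.mem_closedBall, dist_zero_right]
  exact entry_abs_le_one hM a b

end Aux

section Main

variable {ι : Type} [Fintype ι] [DecidableEq ι]
variable (d : ι → Type) [∀ i, Fintype (d i)] [∀ i, DecidableEq (d i)] [∀ i, Nonempty (d i)]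

lemma continuous_ptrace (X : Finset ι) : Continuous (ptrace d X) := by
  apply continuous_matrix
  intro a b
  simp only [ptrace, Matrix.of_apply]
  exact continuous_finset_sum _ fun c _ => continuous_id.matrix_elem _ _

lemma isClosed_CRT (Λ : Finset (Finset ι)) (T : Finset ι) (F : Set (SubMat d T))
    (hFc : IsCompact F) : IsClosed (CRT d Λ T F) := by
  have himg : CRT d Λ T F = (fun (ρ : GlobalMat d) (X : Λ) => ptrace d X.1 ρ) ''
      ({ρ : GlobalMat d | IsState ρ} ∩ (ptrace d T ⁻¹' F)) := by
    ext σ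
    constructor
    · rintro ⟨ρ, h1, h2, h3⟩
      exact ⟨ρ, ⟨h1, h3⟩, funext h2⟩
    · rintro ⟨ρ, ⟨h1, h3⟩, rfl⟩
      exact ⟨ρ, h1, fun X => rfl, h3⟩
  rw [himg]
  refine IsCompact.isClosed (IsCompact.image ?_ ?_)
  · exact IsCompact.of_isClosed_subset isCompact_setOf_isState
      (isClosed_setOf_isState.inter (hFc.isClosed.preimage (continuous_ptrace d T)))
      Set.inter_subset_left
  · exact continuous_pi fun X => continuous_ptrace d X.1

end Main

/-- Theorem 3 of the paper, "R-Free Incompatibility Monotone".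
Under Assumptions (A1) and (A2), and assuming every free channel in `O_R` maps free
states to free states, the robustness `R_{R|T}` vanishes exactly on `C_{R|T,Λ}` and is
monotone under the free operations `𝔒_{R|T,Λ}`. -/
theorem robustness_is_monotone
    {ι : Type} [Fintype ι] [DecidableEq ι]
    (d : ι → Type) [∀ i, Fintype (d i)] [∀ i, DecidableEq (d i)] [∀ i, Nonempty (d i)]
    (Λ : Finset (Finset ι)) (T : Finset ι) (F : Set (SubMat d T))
    (hF : ∀ η ∈ F, IsState η)
    (hA1 : Convex ℝ F ∧ IsCompact F)
    (hA2 : ∃ ρ : GlobalMat d, IsState ρ ∧ ptrace d T ρ ∈ F ∧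
      ∀ X : Λ, (ptrace d X.1 ρ).PosDef)
    (OR : Set (SubMat d T →ₗ[ℂ] SubMat d T))
    (hOR : ∀ Φ ∈ OR, IsChannel Φ)
    (hpres : ∀ Φ ∈ OR, ∀ η ∈ F, Φ η ∈ F) :
    (∀ τ : ∀ X : Λ, SubMat d X.1, (∀ X : Λ, IsState (τ X)) →
      (robustness d Λ T F τ = 0 ↔ τ ∈ CRT d Λ T F)) ∧
    (∀ σ : ∀ X : Λ, SubMat d X.1, (∀ X : Λ, IsState (σ X)) →
      ∀ ℰ ∈ freeOps d Λ T OR,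
        robustness d Λ T F (fun X : Λ => ℰ X (σ X)) ≤ robustness d Λ T F σ) := by
  obtain ⟨hFconv, hFcomp⟩ := hA1
  constructor
  · -- part (1)
    intro τ hτ
    constructor
    · -- robustness = 0 → τ ∈ CRT
      intro h0
      have hCRTcl : IsClosed (CRT d Λ T F) := isClosed_CRT d Λ T F hFcomp
      have hex : ∀ n : ℕ, ∃ p : ℝ, 0 < p ∧ p ≤ 1 ∧
          (∃ τ' : ∀ X : Λ, SubMat d X.1, (∀ X : Λ, IsState (τ' X)) ∧
            (fun X : Λ => p • τ X + (1 - p) • τ' X) ∈ CRT d Λ T F) ∧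
          -Real.logb 2 p < 1 / ((n : ℝ) + 1) := by
        intro n
        have hlt : robustness d Λ T F τ < ENNReal.ofReal (1 / ((n : ℝ) + 1)) := by
          rw [h0]
          exact ENNReal.ofReal_pos.mpr (by positivity)
        obtain ⟨r, hrmem, hrlt⟩ := sInf_lt_iff.mp hlt
        obtain ⟨p, hp0, hp1, hτ', rfl⟩ := hrmem
        exact ⟨p, hp0, hp1, hτ',
          (ENNReal.ofReal_lt_ofReal_iff (by positivity)).mp hrlt⟩
      choose p hp0 hp1 hτ' hplt using hex
      choose τ' hτ'st hτ'mem using hτ'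
      have hub : ∀ n : ℕ, 1 - p n ≤ 1 - (2 : ℝ) ^ (-(1 / ((n : ℝ) + 1))) := by
        intro n
        have h1 : -(1 / ((n : ℝ) + 1)) < Real.logb 2 (p n) := by linarith [hplt n]
        have h2 : (2 : ℝ) ^ (-(1 / ((n : ℝ) + 1))) < (2 : ℝ) ^ Real.logb 2 (p n) :=
          (Real.rpow_lt_rpow_left_iff one_lt_two).mpr h1
        rw [Real.rpow_logb two_pos (by norm_num) (hp0 n)] at h2
        linarith
      have hto : Filter.Tendsto (fun n : ℕ => 1 - p n) Filter.atTop (nhds 0) := by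
        have h1 : Filter.Tendsto (fun n : ℕ => -(1 / ((n : ℝ) + 1)))
            Filter.atTop (nhds 0) := by
          simpa using (tendsto_one_div_add_atTop_nhds_zero_nat (𝕜 := ℝ)).neg
        have h2 : Filter.Tendsto (fun n : ℕ => (2 : ℝ) ^ (-(1 / ((n : ℝ) + 1))))
            Filter.atTop (nhds 1) := by
          have := (Real.continuousAt_const_rpow (two_ne_zero (α := ℝ))).tendsto.comp h1
          simpa [Function.comp_def] using this
        have h3 : Filter.Tendsto (fun n : ℕ => 1 - (2 : ℝ) ^ (-(1 / ((n : ℝ) + 1))))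
            Filter.atTop (nhds 0) := by
          simpa using h2.const_sub 1
        exact squeeze_zero (fun n => by linarith [hp1 n]) hub h3
      have htend : Filter.Tendsto
          (fun n : ℕ => fun X : Λ => p n • τ X + (1 - p n) • τ' n X)
          Filter.atTop (nhds τ) := by
        rw [tendsto_pi_nhds]
        intro X
        show Filter.Tendsto (fun n : ℕ => p n • τ X + (1 - p n) • τ' n X)
          Filter.atTop (nhds (τ X))
        refine tendsto_pi_nhds.mpr ?_
        intro a
        rw [tendsto_pi_nhds]
        intro b
        have hrw : (fun n : ℕ => (p n • τ X + (1 - p n) • τ' n X) a b)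
            = fun n : ℕ => τ X a b + (1 - p n) • (τ' n X a b - τ X a b) := by
          funext n
          simp only [Matrix.add_apply, Matrix.smul_apply, Complex.real_smul]
          push_cast
          ring
        rw [hrw]
        have hz : Filter.Tendsto (fun n : ℕ => (1 - p n) • (τ' n X a b - τ X a b))
            Filter.atTop (nhds 0) := by
          apply squeeze_zero_norm (a := fun n : ℕ => (1 - p n) * 2)
          · intro n
            rw [Complex.real_smul, norm_mul]
            have hb1 : ‖τ' n X a b - τ X a b‖ ≤ 2 := by
              calc ‖τ' n X a b - τ X a b‖ ≤ ‖τ' n X a b‖ + ‖τ X a b‖ := norm_sub_le _ _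
                _ ≤ 1 + 1 := by
                    exact add_le_add (entry_abs_le_one (hτ'st n X) a b)
                      (entry_abs_le_one (hτ X) a b)
                _ = 2 := by norm_num
            have hn1 : ‖((1 - p n : ℝ) : ℂ)‖ = 1 - p n := by
              rw [Complex.norm_real, Real.norm_eq_abs, abs_of_nonneg (by linarith [hp1 n])]
            rw [hn1]
            exact mul_le_mul_of_nonneg_left hb1 (by linarith [hp1 n])
          · simpa using hto.mul_const 2
        simpa using tendsto_const_nhds.add hz
      have hmemcl : τ ∈ closure (CRT d Λ T F) :=
        mem_closure_of_tendsto htend (Filter.Eventually.of_forall fun n => hτ'mem n)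
      rwa [hCRTcl.closure_eq] at hmemcl
    · -- τ ∈ CRT → robustness = 0
      intro hmem
      refine le_antisymm ?_ zero_le
      refine sInf_le ?_
      refine ⟨1, one_pos, le_refl 1, ⟨τ, hτ, ?_⟩, by simp [Real.logb_one]⟩
      have : (fun X : Λ => (1 : ℝ) • τ X + (1 - 1 : ℝ) • τ X) = τ := by
        funext X
        simp
      rw [show (fun X : Λ => (1 : ℝ) • τ X + (1 - (1:ℝ)) • τ X) = τ from this]
      exact hmem
  · -- part (2): monotonicity
    intro σ hσ ℰ hℰ
    apply sInf_le_sInf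
    rintro r ⟨q, hq0, hq1, ⟨τ, hτst, hmix⟩, rfl⟩
    obtain ⟨hchX, ℰS, hℰS, hmargX, ℰT, hℰTOR, hℰTmarg⟩ := hℰ
    refine ⟨q, hq0, hq1, ⟨fun X => ℰ X (τ X),
      fun X => channel_isState (hchX X) (hτst X), ?_⟩, rfl⟩
    obtain ⟨ρ, hρst, hρmarg, hρT⟩ := hmix
    refine ⟨ℰS ρ, channel_isState hℰS hρst, ?_, ?_⟩
    · intro X
      rw [(hmargX X).2 ρ, hρmarg X, map_add, LinearMap.map_smul_of_tower, LinearMap.map_smul_of_tower]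
    · rw [hℰTmarg.2 ρ]
      exact hpres ℰT hℰTOR _ hρT


end RMP
end

section
/- Assume Assumptions A1 and A2 hold. Then: (i) for every family σ_Λ of states on the subsystems X ∈ Λ, the primal value t(σ_Λ) is finite; (ii) there exists V_* in the relative interior (intrinsic interior over ℝ) of the cone 𝒞_{R|T} such that, for every family σ_Λ of states on the X ∈ Λ and every X ∈ Λ, the matrix tr_{S∖X}(V_*) − σ_X is positive definite. -/
open scoped ComplexOrder ENNReal Kronecker Matrix

/-!
Assumption A2 gives a free global state `ρ` whose marginals satisfy `tr_{S∖X} ρ ≥ ε • 1` for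
some `ε > 0`, while every state is bounded above by `1`. Hence for large `α` the point `α • ρ` of
the cone `𝒞_{R|T}` has marginals strictly above every family of states, which makes the primal
value finite. By A1 the cone is convex, so it has a relative interior point `V₀`; in a convex
cone `V₀ + α • ρ` is again relatively interior, and its marginals exceed those of `α • ρ` by
positive semidefinite matrices.
-/

open Filter Topology
open scoped Pointwise

namespace Matrix

variable {n 𝕜 : Type*} [Fintype n] [DecidableEq n] [RCLike 𝕜] {A : Matrix n n 𝕜}

open scoped MatrixOrder

theorem PosDef.exists_pos_posSemidef_sub_smul_one (hA : A.PosDef) :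
    ∃ ε : ℝ, 0 < ε ∧ (A - ε • (1 : Matrix n n 𝕜)).PosSemidef := by
  have hev : ∀ᶠ ε in 𝓝[>] (0 : ℝ), 0 < ε ∧ ∀ i, ε ≤ hA.1.eigenvalues i :=
    (eventually_mem_nhdsWithin (a := 0) (s := Set.Ioi 0)).and <| eventually_all.2 fun i =>
      nhdsWithin_le_nhds <| eventually_le_nhds (hA.eigenvalues_pos i)
  obtain ⟨ε, hε, hle⟩ := hev.exists
  refine ⟨ε, hε, ?_⟩
  rw [← le_iff, ← Algebra.algebraMap_eq_smul_one,
    algebraMap_le_iff_le_spectrum hA.1.isSelfAdjoint, hA.1.spectrum_real_eq_range_eigenvalues]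
  rintro _ ⟨i, rfl⟩
  exact hle i

theorem PosSemidef.posSemidef_re_trace_smul_one_sub (hA : A.PosSemidef) :
    ((RCLike.re A.trace) • (1 : Matrix n n 𝕜) - A).PosSemidef := by
  rw [← le_iff, ← Algebra.algebraMap_eq_smul_one,
    le_algebraMap_iff_spectrum_le hA.1.isSelfAdjoint, hA.1.spectrum_real_eq_range_eigenvalues]
  rintro _ ⟨i, rfl⟩
  rw [hA.1.trace_eq_sum_eigenvalues, map_sum]
  simp only [RCLike.ofReal_re]
  exact Finset.single_le_sum (fun j _ => hA.eigenvalues_nonneg j) (Finset.mem_univ i)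

end Matrix

section Convex

variable {𝕜 E : Type*} [Field 𝕜] [LinearOrder 𝕜] [IsStrictOrderedRing 𝕜] [AddCommGroup E]
  [Module 𝕜 E] {S : Set E}

theorem Convex.Ici_zero_smul (hS : Convex 𝕜 S) : Convex 𝕜 (Set.Ici (0 : 𝕜) • S) := by
  rintro _ ⟨α₁, hα₁, x₁, hx₁, rfl⟩ _ ⟨α₂, hα₂, x₂, hx₂, rfl⟩ p q hp hq hpq
  simp only [Set.mem_Ici] at hα₁ hα₂
  have hβ : 0 ≤ p * α₁ + q * α₂ := by positivity
  rcases hβ.eq_or_lt with hβ | hβ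
  · obtain ⟨h₁, h₂⟩ : p * α₁ = 0 ∧ q * α₂ = 0 :=
      (add_eq_zero_iff_of_nonneg (by positivity) (by positivity)).1 hβ.symm
    rw [smul_smul, smul_smul, h₁, h₂, zero_smul, zero_smul, add_zero, ← zero_smul 𝕜 x₁]
    exact Set.smul_mem_smul Set.self_mem_Ici hx₁
  · have hx : (p * α₁ / (p * α₁ + q * α₂)) • x₁ + (q * α₂ / (p * α₁ + q * α₂)) • x₂ ∈ S :=
      hS hx₁ hx₂ (by positivity) (by positivity) (by field_simp)
    convert Set.smul_mem_smul (Set.mem_Ici.2 hβ.le) hx using 1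
    rw [smul_add, smul_smul, smul_smul, smul_smul, smul_smul, mul_div_cancel₀ _ hβ.ne',
      mul_div_cancel₀ _ hβ.ne']

end Convex

section IntrinsicInterior

variable {E : Type*} [NormedAddCommGroup E] [NormedSpace ℝ E] {C : Set E}

theorem Convex.combo_intrinsicInterior_self_mem_intrinsicInterior (hC : Convex ℝ C) {x y : E}
    (hx : x ∈ intrinsicInterior ℝ C) (hy : y ∈ C) {a b : ℝ} (ha : 0 < a) (hb : 0 ≤ b)
    (hab : a + b = 1) : a • x + b • y ∈ intrinsicInterior ℝ C := by
  obtain ⟨x, hx, rfl⟩ := hx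
  let y' : affineSpan ℝ C := ⟨y, subset_affineSpan ℝ C hy⟩
  have : Nonempty (affineSpan ℝ C) := ⟨y'⟩
  -- Work in the direction of the affine span, with origin at `y`.
  let φ := AffineIsometryEquiv.vaddConst ℝ y'
  have hint : interior (φ ⁻¹' (Subtype.val ⁻¹' C)) = φ ⁻¹' interior (Subtype.val ⁻¹' C) :=
    (φ.toHomeomorph.preimage_interior _).symm
  have hconv : Convex ℝ (φ ⁻¹' (Subtype.val ⁻¹' C)) :=
    (hC.translate_preimage_left y).linear_preimage (affineSpan ℝ C).direction.subtype
  have hx' : φ.symm x ∈ interior (φ ⁻¹' (Subtype.val ⁻¹' C)) := by simpa [hint] using hx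
  have h0 : (0 : (affineSpan ℝ C).direction) ∈ φ ⁻¹' (Subtype.val ⁻¹' C) := by simpa [φ] using hy
  have hcombo := hconv.combo_interior_self_mem_interior hx' h0 ha hb hab
  rw [smul_zero, add_zero, hint] at hcombo
  refine ⟨_, hcombo, ?_⟩
  obtain rfl : b = 1 - a := by linarith
  show ((a • (x -ᵥ y') : (affineSpan ℝ C).direction) : E) + y = _
  rw [Submodule.coe_smul, AffineSubspace.coe_vsub, vsub_eq_sub]
  module

theorem Convex.add_mem_intrinsicInterior_of_smul_mem (hC : Convex ℝ C)
    (hsmul : ∀ t : ℝ, 0 < t → ∀ x ∈ C, t • x ∈ C) {x y : E}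
    (hx : x ∈ intrinsicInterior ℝ C) (hy : y ∈ C) : x + y ∈ intrinsicInterior ℝ C := by
  let φ : E ≃ᴬ[ℝ] E :=
    (ContinuousLinearEquiv.smulLeft (G := ℝˣ) (Units.mk0 2 two_ne_zero)).toContinuousAffineEquiv
  have hφ : φ '' C = C := by
    refine (Set.image_subset_iff.2 fun z hz => hsmul 2 two_pos z hz).antisymm fun z hz =>
      ⟨(1 / 2 : ℝ) • z, hsmul _ (by norm_num) z hz, ?_⟩
    simp
  have hmid := hC.combo_intrinsicInterior_self_mem_intrinsicInterior hx hy
    (a := 1 / 2) (b := 1 / 2) (by norm_num) (by norm_num) (by norm_num)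
  rw [← hφ, ContinuousAffineEquiv.intrinsicInterior_image]
  refine ⟨_, hmid, ?_⟩
  show (2 : ℝ) • ((1 / 2 : ℝ) • x + (1 / 2 : ℝ) • y) = x + y
  module

end IntrinsicInterior

namespace RMP

section States

variable {m : Type} [Fintype m]

theorem convex_setOf_isState : Convex ℝ {ρ : Matrix m m ℂ | IsState ρ} := by
  rintro ρ ⟨hρ, htrρ⟩ σ ⟨hσ, htrσ⟩ a b ha hb hab
  refine ⟨(hρ.smul ha).add (hσ.smul hb), ?_⟩
  rw [Matrix.trace_add, Matrix.trace_smul, Matrix.trace_smul, htrρ, htrσ]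
  simp only [Complex.real_smul, mul_one]
  exact_mod_cast hab

theorem _root_.Matrix.PosDef.eventually_posDef_smul_sub [DecidableEq m] {A : Matrix m m ℂ}
    (hA : A.PosDef) : ∀ᶠ a : ℝ in atTop, ∀ σ : Matrix m m ℂ, IsState σ → (a • A - σ).PosDef := by
  obtain ⟨ε, hε, hAε⟩ := hA.exists_pos_posSemidef_sub_smul_one
  filter_upwards [eventually_gt_atTop ε⁻¹] with a ha σ ⟨hσ, htr⟩
  have hσ1 : ((1 : Matrix m m ℂ) - σ).PosSemidef := by
    simpa [htr] using hσ.posSemidef_re_trace_smul_one_sub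
  have hgap : ((a * ε - 1) • (1 : Matrix m m ℂ)).PosDef :=
    Matrix.PosDef.one.smul (sub_pos.2 ((inv_lt_iff_one_lt_mul₀ hε).1 ha))
  rw [show a • A - σ = a • (A - ε • 1) + ((a * ε - 1) • 1 + (1 - σ)) by module]
  exact Matrix.PosDef.posSemidef_add (hAε.smul ((inv_pos.2 hε).trans ha).le)
    (hgap.add_posSemidef hσ1)

end States

section PartialTrace

variable {ι : Type} [Fintype ι] [DecidableEq ι] {d : ι → Type} [∀ i, Fintype (d i)]
  (X : Finset ι)

theorem ptrace_add (ρ σ : GlobalMat d) : ptrace d X (ρ + σ) = ptrace d X ρ + ptrace d X σ := by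
  ext a b
  simp [ptrace, Finset.sum_add_distrib]

theorem ptrace_smul {R : Type*} [Monoid R] [DistribMulAction R ℂ] (r : R) (ρ : GlobalMat d) :
    ptrace d X (r • ρ) = r • ptrace d X ρ := by
  ext a b
  simp [ptrace, Finset.smul_sum]

theorem ptrace_eq_sum_submatrix (ρ : GlobalMat d) :
    ptrace d X ρ = ∑ c, ρ.submatrix (combine d X · c) (combine d X · c) := by
  ext a b
  simp [ptrace, Matrix.sum_apply]

theorem _root_.Matrix.PosSemidef.ptrace {ρ : GlobalMat d} (hρ : ρ.PosSemidef) :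
    (ptrace d X ρ).PosSemidef := by
  rw [ptrace_eq_sum_submatrix]
  exact Matrix.posSemidef_sum _ fun c _ => hρ.submatrix _

end PartialTrace

section Cone

variable {ι : Type} [Fintype ι] [DecidableEq ι] {d : ι → Type} [∀ i, Fintype (d i)]
  {T : Finset ι} {F : Set (SubMat d T)}

theorem coneRT_eq_Ici_zero_smul :
    coneRT d T F = Set.Ici (0 : ℝ) • {η | IsState η ∧ ptrace d T η ∈ F} := by
  ext V
  simp [coneRT, Set.mem_smul, and_assoc, eq_comm]

theorem convex_coneRT (hF : Convex ℝ F) : Convex ℝ (coneRT d T F) := by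
  rw [coneRT_eq_Ici_zero_smul]
  exact (convex_setOf_isState.inter
    (hF.is_linear_preimage ⟨ptrace_add T, ptrace_smul T⟩)).Ici_zero_smul

theorem smul_mem_coneRT {t : ℝ} (ht : 0 ≤ t) {V : GlobalMat d} (hV : V ∈ coneRT d T F) :
    t • V ∈ coneRT d T F := by
  obtain ⟨α, hα, η, hη, hηF, rfl⟩ := hV
  exact ⟨t * α, mul_nonneg ht hα, η, hη, hηF, smul_smul t α η⟩

theorem posSemidef_of_mem_coneRT {V : GlobalMat d} (hV : V ∈ coneRT d T F) : V.PosSemidef := by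
  obtain ⟨α, hα, η, hη, -, rfl⟩ := hV
  exact hη.1.smul hα

theorem primal_le_ofReal_trace {Λ : Finset (Finset ι)} {σ : ∀ X : Λ, SubMat d X.1}
    {V : GlobalMat d} (hV : V ∈ coneRT d T F)
    (hVσ : ∀ X : Λ, (ptrace d X.1 V - σ X).PosSemidef) :
    primal d Λ T F σ ≤ ENNReal.ofReal V.trace.re :=
  sInf_le ⟨V, hV, hVσ, rfl⟩

end Cone

theorem primal_finite_and_slater_general
    {ι : Type} [Fintype ι] [DecidableEq ι]
    (d : ι → Type) [∀ i, Fintype (d i)]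
    (Λ : Finset (Finset ι)) (T : Finset ι) (F : Set (SubMat d T))
    (hA1 : Convex ℝ F ∧ IsCompact F)
    (hA2 : ∃ ρ : GlobalMat d, IsState ρ ∧ ptrace d T ρ ∈ F ∧
      ∀ X : Λ, (ptrace d X.1 ρ).PosDef) :
    (∀ σ : ∀ X : Λ, SubMat d X.1, (∀ X : Λ, IsState (σ X)) →
      primal d Λ T F σ ≠ ⊤) ∧
    ∃ V : GlobalMat d, V ∈ intrinsicInterior ℝ (coneRT d T F) ∧
      ∀ σ : ∀ X : Λ, SubMat d X.1, (∀ X : Λ, IsState (σ X)) →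
        ∀ X : Λ, (ptrace d X.1 V - σ X).PosDef := by
  classical
  obtain ⟨ρ, hρ, hρF, hρpd⟩ := hA2
  obtain ⟨α, hα, hαρ⟩ : ∃ α : ℝ, 0 ≤ α ∧
      ∀ X : Λ, ∀ σ : SubMat d X.1, IsState σ → (α • ptrace d X.1 ρ - σ).PosDef :=
    ((eventually_ge_atTop 0).and (eventually_all.2 fun X =>
      (hρpd X).eventually_posDef_smul_sub)).exists
  have hαρ_mem : α • ρ ∈ coneRT d T F := ⟨α, hα, ρ, hρ, hρF, rfl⟩
  refine ⟨fun σ hσ => ne_top_of_le_ne_top ENNReal.ofReal_ne_top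
    (primal_le_ofReal_trace hαρ_mem fun X => ?_), ?_⟩
  · rw [ptrace_smul]
    exact (hαρ X (σ X) (hσ X)).posSemidef
  -- Any norm inducing the product topology gives access to the finite-dimensional theory.
  let : NormedAddCommGroup (GlobalMat d) := Matrix.normedAddCommGroup
  let : NormedSpace ℝ (GlobalMat d) := Matrix.normedSpace
  have hconv := convex_coneRT (d := d) hA1.1
  obtain ⟨V₀, hV₀⟩ := Set.Nonempty.intrinsicInterior hconv ⟨_, hαρ_mem⟩
  refine ⟨V₀ + α • ρ, hconv.add_mem_intrinsicInterior_of_smul_mem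
    (fun t ht V hV => smul_mem_coneRT ht.le hV) hV₀ hαρ_mem, fun σ hσ X => ?_⟩
  rw [ptrace_add, ptrace_smul, add_sub_assoc]
  exact Matrix.PosDef.posSemidef_add
    ((posSemidef_of_mem_coneRT (intrinsicInterior_subset hV₀)).ptrace X.1) (hαρ X (σ X) (hσ X))

/-- Lemma 6 of the paper, finiteness and Slater's condition.
Under Assumptions (A1) and (A2), the primal value is finite for every family of
marginal states, and there is a point `V_*` in the relative (intrinsic) interior of the
cone `𝒞_{R|T}` that is strictly feasible for every family of marginal states. -/
theorem primal_finite_and_slater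
    {ι : Type} [Fintype ι] [DecidableEq ι]
    (d : ι → Type) [∀ i, Fintype (d i)] [∀ i, DecidableEq (d i)] [∀ i, Nonempty (d i)]
    (Λ : Finset (Finset ι)) (T : Finset ι) (F : Set (SubMat d T))
    (hF : ∀ η ∈ F, IsState η)
    (hA1 : Convex ℝ F ∧ IsCompact F)
    (hA2 : ∃ ρ : GlobalMat d, IsState ρ ∧ ptrace d T ρ ∈ F ∧
      ∀ X : Λ, (ptrace d X.1 ρ).PosDef) :
    (∀ σ : ∀ X : Λ, SubMat d X.1, (∀ X : Λ, IsState (σ X)) →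
      primal d Λ T F σ ≠ ⊤) ∧
    ∃ V : GlobalMat d, V ∈ intrinsicInterior ℝ (coneRT d T F) ∧
      ∀ σ : ∀ X : Λ, SubMat d X.1, (∀ X : Λ, IsState (σ X)) →
        ∀ X : Λ, (ptrace d X.1 V - σ X).PosDef :=
  primal_finite_and_slater_general d Λ T F hA1 hA2

end RMP
end
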